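/- arXiv:2507.07943 — 2 statements merged into one kernel-verified Lean document; each statement's English description precedes it below -/
import Mathlib

section
/- Let G=(V,A) be a finite directed graph, let k ≥ 1 be an integer, and let x : A → ℝ satisfy x_e ≥ 0 for every edge e and ∑_{e∈P} x_e ≥ 1 for every directed path P consisting of k edges. Then for every labeling ℓ : V → [0,1], every directed path with k edges contains at least one edge e=(u,v) with ℓ(v) − ℓ(u) ≤ (k+1)·x_e − 1. Consequently, deleting all edges e=(u,v) with ℓ(v) − ℓ(u) ≤ (k+1)·x_e − 1 leaves a graph with no directed path of k edges. -/
/-! Along a path with `k` edges the label increments `ℓ v - ℓ u` telescope to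
`ℓ (end) - ℓ (start) ≤ 1`, whereas the thresholds `(k+1)·x_e - 1` sum to
`(k+1)·∑ x_e - k ≥ 1`. So the increments cannot all exceed their thresholds. -/

theorem Fin.sum_succ_sub_castSucc {M : Type*} [AddCommGroup M] {n : ℕ} (f : Fin (n + 1) → M) :
    ∑ i : Fin n, (f i.succ - f i.castSucc) = f (Fin.last n) - f 0 := by
  induction n with
  | zero => simp
  | succ n ih =>
    rw [Fin.sum_univ_castSucc]
    simp only [Fin.succ_castSucc]
    rw [ih fun i => f i.castSucc]
    simp

theorem Fin.exists_succ_sub_castSucc_le {K : Type*} [CommRing K] [LinearOrder K]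
    [IsStrictOrderedRing K] {k : ℕ} (w : Fin k → K) (f : Fin (k + 1) → K)
    (hw : 1 ≤ ∑ i, w i) (hf : f (Fin.last k) - f 0 ≤ 1) :
    ∃ i : Fin k, f i.succ - f i.castSucc ≤ (k + 1) * w i - 1 := by
  have hne : (Finset.univ : Finset (Fin k)).Nonempty :=
    Finset.nonempty_of_sum_ne_zero ((zero_lt_one' K).trans_le hw).ne'
  have hsum : ∑ i : Fin k, (f i.succ - f i.castSucc) ≤ ∑ i, ((k + 1) * w i - 1) :=
    calc ∑ i : Fin k, (f i.succ - f i.castSucc)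
      _ = f (Fin.last k) - f 0 := Fin.sum_succ_sub_castSucc f
      _ ≤ (k + 1) * 1 - k := by linarith
      _ ≤ (k + 1) * ∑ i, w i - k := by gcongr
      _ = ∑ i, ((k + 1) * w i - 1) := by simp [Finset.sum_sub_distrib, Finset.mul_sum]
  obtain ⟨i, -, hi⟩ := Finset.exists_le_of_sum_le hne hsum
  exact ⟨i, hi⟩

theorem stmt_0_general {V : Type*} (A : Finset (V × V)) (k : ℕ)
    (x : V × V → ℝ)
    (hx_path : ∀ p : Fin (k + 1) → V,
      (∀ i : Fin k, (p i.castSucc, p i.succ) ∈ A) →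
      1 ≤ ∑ i : Fin k, x (p i.castSucc, p i.succ))
    (ℓ : V → ℝ) (hℓ : ∀ v, ℓ v ∈ Set.Icc (0 : ℝ) 1) :
    (∀ p : Fin (k + 1) → V,
      (∀ i : Fin k, (p i.castSucc, p i.succ) ∈ A) →
      ∃ i : Fin k,
        ℓ (p i.succ) - ℓ (p i.castSucc) ≤ (k + 1) * x (p i.castSucc, p i.succ) - 1) ∧
    ¬ ∃ p : Fin (k + 1) → V, ∀ i : Fin k,
        (p i.castSucc, p i.succ) ∈ A ∧
        ¬ (ℓ (p i.succ) - ℓ (p i.castSucc) ≤ (k + 1) * x (p i.castSucc, p i.succ) - 1) := by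
  have key : ∀ p : Fin (k + 1) → V, (∀ i : Fin k, (p i.castSucc, p i.succ) ∈ A) →
      ∃ i : Fin k,
        ℓ (p i.succ) - ℓ (p i.castSucc) ≤ (k + 1) * x (p i.castSucc, p i.succ) - 1 :=
    fun p hp => Fin.exists_succ_sub_castSucc_le _ (fun i => ℓ (p i)) (hx_path p hp)
      (by linarith [(hℓ (p (Fin.last k))).2, (hℓ (p 0)).1])
  refine ⟨key, ?_⟩
  rintro ⟨p, hp⟩
  obtain ⟨i, hi⟩ := key p fun i => (hp i).1
  exact (hp i).2 hi

/-- For a finite directed graph `(V, A)`, `k ≥ 1`, and a feasible LP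
solution `x` (nonnegative, and summing to at least `1` along every directed path with
`k` edges), every labeling `ℓ : V → [0,1]` has the property that each directed path with
`k` edges contains an edge `e = (u,v)` with `ℓ v - ℓ u ≤ (k+1)·x e - 1`; consequently,
after deleting all such edges no directed path with `k` edges remains. -/
theorem stmt_0 {V : Type*} [Fintype V] (A : Finset (V × V)) (k : ℕ) (hk : 1 ≤ k)
    (x : V × V → ℝ)
    (hx_nonneg : ∀ e ∈ A, 0 ≤ x e)
    (hx_path : ∀ p : Fin (k + 1) → V,
      (∀ i : Fin k, (p i.castSucc, p i.succ) ∈ A) →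
      1 ≤ ∑ i : Fin k, x (p i.castSucc, p i.succ))
    (ℓ : V → ℝ) (hℓ : ∀ v, ℓ v ∈ Set.Icc (0 : ℝ) 1) :
    (∀ p : Fin (k + 1) → V,
      (∀ i : Fin k, (p i.castSucc, p i.succ) ∈ A) →
      ∃ i : Fin k,
        ℓ (p i.succ) - ℓ (p i.castSucc) ≤ (k + 1) * x (p i.castSucc, p i.succ) - 1) ∧
    ¬ ∃ p : Fin (k + 1) → V, ∀ i : Fin k,
        (p i.castSucc, p i.succ) ∈ A ∧
        ¬ (ℓ (p i.succ) - ℓ (p i.castSucc) ≤ (k + 1) * x (p i.castSucc, p i.succ) - 1) :=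
  stmt_0_general A k x hx_path ℓ hℓ
end

section
/- For every probability distribution D supported on [0,1], if X and Y are independent random variables each distributed according to D, then there exists t ∈ [-1,1] with Pr[X − Y ≤ t] > 0.539·(t + 1). Equivalently, no α ≤ 0.539 can satisfy Pr[X − Y ≤ t] ≤ α·(t+1) for all t ∈ [-1,1]. -/
/-!
Let `ν` be the law of `X - Y`. It is symmetric, lives on `[-1, 1]` and is positive definite:
`∫ cos (l x) dν = (∫ cos (l x) dD)² + (∫ sin (l x) dD)² ≥ 0`. Hence the positive combination of
cosines `K s = 2√3 cos (3πs/2) + cos (3πs)` has `∫ K dν ≥ 0`. On the other hand, Fubini gives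
`∫ K dν = K 1 - ∫₀¹ K' s · H s ds` with `H s = ν {|x| < s}`, and by symmetry a bound
`ν (-∞, t] ≤ α (t + 1)` confines `H s` to the strip `2αs ± (2α - 1)`. On each of the four arcs
of `[0, 1]` where `K'` has constant sign, the appropriate edge of the strip bounds `∫ K' H` from
below, and the resulting explicit integrals give `8α√3/(3π) ≤ (2α - 1)(13 - 2√3)`, which fails
for `α = 0.539`.
-/

open MeasureTheory Real Set

theorem integral_comp_abs_eq_sub_integral (ν : Measure ℝ) [IsProbabilityMeasure ν] {R : ℝ}
    (hR : 0 ≤ R) (hν : ∀ᵐ x ∂ν, |x| ≤ R) {f f' : ℝ → ℝ} (hf : ∀ s, HasDerivAt f (f' s) s)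
    (hf' : Continuous f') :
    ∫ x, f |x| ∂ν = f R - ∫ s in 0..R, f' s * ν.real {x | |x| < s} := by
  set g : ℝ → ℝ → ℝ := fun x s => if |x| < s then f' s else 0
  obtain ⟨C, hC⟩ := (isCompact_Icc (a := 0) (b := R)).exists_bound_of_continuousOn
    hf'.continuousOn
  have hg_int : Integrable (Function.uncurry g) (ν.prod (volume.restrict (Ioc 0 R))) := by
    refine Integrable.of_bound (Measurable.aestronglyMeasurable ?_) C ?_
    · exact Measurable.ite (measurableSet_lt measurable_fst.abs measurable_snd)
        (hf'.measurable.comp measurable_snd) measurable_const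
    · filter_upwards [Measure.quasiMeasurePreserving_snd.ae (ae_restrict_mem measurableSet_Ioc)]
        with p hp
      simp only [Function.uncurry, g]
      split_ifs
      · exact hC _ (Ioc_subset_Icc_self hp)
      · simpa using (norm_nonneg _).trans (hC _ (Ioc_subset_Icc_self hp))
  have hg_x (s : ℝ) : ∫ x, g x s ∂ν = f' s * ν.real {x | |x| < s} := by
    rw [mul_comm, ← smul_eq_mul,
      ← integral_indicator_const _ (measurableSet_lt measurable_abs measurable_const)]
    rfl
  have hg_s : (fun x => ∫ s in Ioc 0 R, g x s) =ᵐ[ν] fun x => f R - f |x| := by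
    filter_upwards [hν] with x hx
    have : g x = (Ioi |x|).indicator f' := by
      ext s; simp [g, indicator]
    rw [this, setIntegral_indicator measurableSet_Ioi, Ioc_inter_Ioi, max_eq_right (abs_nonneg x),
      ← intervalIntegral.integral_of_le hx]
    exact intervalIntegral.integral_eq_sub_of_hasDerivAt (fun s _ => hf s)
      (hf'.intervalIntegrable _ _)
  have hint : Integrable (fun x => f R - f |x|) ν := hg_int.integral_prod_left.congr hg_s
  calc ∫ x, f |x| ∂ν = ∫ x, (f R - (f R - f |x|)) ∂ν := by simp
    _ = f R - ∫ x, (f R - f |x|) ∂ν := by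
      rw [integral_sub (integrable_const _) hint, integral_const, probReal_univ, one_smul]
    _ = f R - ∫ s in 0..R, f' s * ν.real {x | |x| < s} := by
      rw [← integral_congr_ae hg_s, integral_integral_swap hg_int,
        intervalIntegral.integral_of_le hR]
      simp only [hg_x]

section NegInvariant

variable {ν : Measure ℝ} [ν.IsNegInvariant]

lemma measureReal_Ici_eq_measureReal_Iic_neg (s : ℝ) : ν.real (Ici s) = ν.real (Iic (-s)) := by
  simp only [measureReal_def, ← Measure.measure_neg ν (Iic (-s)), Set.neg_Iic, neg_neg]

variable [IsProbabilityMeasure ν]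

lemma measureReal_abs_lt_eq {s : ℝ} (hs : 0 < s) :
    ν.real {x | |x| < s} = 1 - 2 * ν.real (Iic (-s)) := by
  have hset : {x : ℝ | |x| < s} = (Iic (-s) ∪ Ici s)ᶜ := by
    ext x; simp [abs_lt]
  have hdisj : Disjoint (Iic (-s)) (Ici s) := Iic_disjoint_Ici.mpr (by linarith)
  rw [hset, measureReal_compl (measurableSet_Iic.union measurableSet_Ici),
    measureReal_union hdisj measurableSet_Ici, measureReal_Ici_eq_measureReal_Iic_neg,
    probReal_univ]
  ring

lemma one_sub_measureReal_Iic_le_measureReal_Iic_neg (s : ℝ) :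
    1 - ν.real (Iic s) ≤ ν.real (Iic (-s)) := by
  rw [← measureReal_Ici_eq_measureReal_Iic_neg, ← probReal_compl_eq_one_sub measurableSet_Iic,
    compl_Iic]
  exact measureReal_mono Ioi_subset_Ici_self

end NegInvariant

section DifferenceLaw

variable (D : Measure ℝ)

instance isNegInvariant_map_sub_prod_self [SFinite D] :
    ((D.prod D).map fun p : ℝ × ℝ => p.1 - p.2).IsNegInvariant := by
  refine ⟨?_⟩
  rw [Measure.neg, Measure.map_map measurable_neg (by fun_prop)]
  conv_rhs => rw [← Measure.prod_swap, Measure.map_map (by fun_prop) measurable_swap]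
  congr 1
  ext p
  simp

lemma integral_cos_mul_map_sub_prod_self_nonneg [IsFiniteMeasure D] (l : ℝ) :
    0 ≤ ∫ x, cos (l * x) ∂(D.prod D).map fun p : ℝ × ℝ => p.1 - p.2 := by
  have hbdd (g : ℝ → ℝ) (hg : Continuous g) (hg1 : ∀ x, |g x| ≤ 1) : Integrable g D :=
    Integrable.of_bound hg.aestronglyMeasurable 1 (ae_of_all _ fun x => hg1 x)
  have hc := hbdd (fun x => cos (l * x)) (by fun_prop) fun _ => abs_cos_le_one _
  have hs := hbdd (fun x => sin (l * x)) (by fun_prop) fun _ => abs_sin_le_one _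
  rw [integral_map (by fun_prop) (by fun_prop)]
  simp only [mul_sub, cos_sub]
  rw [integral_add (hc.mul_prod hc) (hs.mul_prod hs),
    integral_prod_mul (fun x => cos (l * x)) (fun x => cos (l * x)),
    integral_prod_mul (fun x => sin (l * x)) (fun x => sin (l * x))]
  exact add_nonneg (mul_self_nonneg _) (mul_self_nonneg _)

lemma ae_abs_le_one_map_sub_prod_self [IsProbabilityMeasure D] (hD : D (Icc 0 1) = 1) :
    ∀ᵐ x ∂(D.prod D).map (fun p : ℝ × ℝ => p.1 - p.2), |x| ≤ 1 := by
  have hD' : ∀ᵐ x ∂D, x ∈ Icc (0 : ℝ) 1 := by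
    rwa [ae_mem_iff_measure_eq measurableSet_Icc.nullMeasurableSet, measure_univ]
  rw [ae_map_iff (by fun_prop) (measurableSet_le (by fun_prop) measurable_const)]
  filter_upwards [Measure.quasiMeasurePreserving_fst.ae hD',
    Measure.quasiMeasurePreserving_snd.ae hD'] with p h₁ h₂
  exact abs_le.mpr ⟨by linarith [h₁.1, h₂.2], by linarith [h₁.2, h₂.1]⟩

end DifferenceLaw

lemma neg_sqrt_three_div_two_le_cos {θ : ℝ} (h₀ : 0 ≤ θ) (h₁ : θ ≤ 5 * π / 6) :
    -(√3 / 2) ≤ cos θ := by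
  have hπ := pi_pos
  calc -(√3 / 2) = cos (π - π / 6) := by rw [cos_pi_sub, cos_pi_div_six]
    _ ≤ cos θ := cos_le_cos_of_nonneg_of_le_pi h₀ (by linarith) (by linarith)

lemma cos_le_neg_sqrt_three_div_two {θ : ℝ} (h : |θ - π| ≤ π / 6) : cos θ ≤ -(√3 / 2) := by
  have hπ := pi_pos
  have : cos (π / 6) ≤ cos |θ - π| :=
    cos_le_cos_of_nonneg_of_le_pi (abs_nonneg _) (by linarith) h
  rw [cos_pi_div_six, cos_abs, cos_sub_pi] at this
  linarith

lemma sin_nonpos_of_pi_le_of_le_two_pi {θ : ℝ} (h₀ : π ≤ θ) (h₁ : θ ≤ 2 * π) : sin θ ≤ 0 := by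
  have := sin_nonneg_of_nonneg_of_le_pi (x := θ - π) (by linarith) (by linarith)
  rw [sin_sub_pi] at this
  linarith

noncomputable def cosKernel (s : ℝ) : ℝ := 2 * √3 * cos (3 * π / 2 * s) + cos (3 * π * s)

noncomputable def cosKernelDeriv (s : ℝ) : ℝ :=
  -(3 * π * √3 * sin (3 * π / 2 * s) + 3 * π * sin (3 * π * s))

noncomputable def cosKernelPrimitive (s : ℝ) : ℝ :=
  4 * √3 / (3 * π) * sin (3 * π / 2 * s) + sin (3 * π * s) / (3 * π)

lemma hasDerivAt_cosKernel (s : ℝ) : HasDerivAt cosKernel (cosKernelDeriv s) s := by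
  have h₁ := ((hasDerivAt_id s).const_mul (3 * π / 2)).cos.const_mul (2 * √3)
  have h₂ := ((hasDerivAt_id s).const_mul (3 * π)).cos
  exact (h₁.add h₂).congr_deriv (by simp only [cosKernelDeriv, id]; ring)

lemma hasDerivAt_cosKernelPrimitive (s : ℝ) :
    HasDerivAt cosKernelPrimitive (cosKernel s) s := by
  have h₁ := ((hasDerivAt_id s).const_mul (3 * π / 2)).sin.const_mul (4 * √3 / (3 * π))
  have h₂ := ((hasDerivAt_id s).const_mul (3 * π)).sin.div_const (3 * π)
  exact (h₁.add h₂).congr_deriv (by simp only [cosKernel, id]; field_simp; ring)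

lemma continuous_cosKernelDeriv : Continuous cosKernelDeriv := by
  unfold cosKernelDeriv; fun_prop

lemma cosKernel_abs (x : ℝ) : cosKernel |x| = cosKernel x := by
  have hπ : 0 < π := pi_pos
  rw [cosKernel, cosKernel, ← cos_abs (3 * π / 2 * x), ← cos_abs (3 * π * x), abs_mul, abs_mul,
    abs_of_pos (by positivity : 0 < 3 * π / 2), abs_of_pos (by positivity : 0 < 3 * π)]

lemma cosKernel_eq (s : ℝ) :
    cosKernel s = 2 * √3 * cos (3 * π / 2 * s) + 2 * cos (3 * π / 2 * s) ^ 2 - 1 := by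
  rw [cosKernel, show 3 * π * s = 2 * (3 * π / 2 * s) by ring, cos_two_mul]; ring

lemma cosKernelDeriv_eq (s : ℝ) :
    cosKernelDeriv s = -(3 * π * (sin (3 * π / 2 * s) * (√3 + 2 * cos (3 * π / 2 * s)))) := by
  rw [cosKernelDeriv, show 3 * π * s = 2 * (3 * π / 2 * s) by ring, sin_two_mul]; ring

section cosKernelDeriv_sign

variable {s : ℝ}

lemma cosKernelDeriv_nonpos_of_nonneg_of_le_five_ninths (h₀ : 0 ≤ s) (h₁ : s ≤ 5 / 9) :
    cosKernelDeriv s ≤ 0 := by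
  have hπ := pi_pos
  rw [cosKernelDeriv_eq, neg_nonpos]
  have hsin := sin_nonneg_of_nonneg_of_le_pi (x := 3 * π / 2 * s) (by positivity) (by nlinarith)
  have hcos := neg_sqrt_three_div_two_le_cos (θ := 3 * π / 2 * s) (by positivity) (by nlinarith)
  exact mul_nonneg (by positivity) (mul_nonneg hsin (by linarith))

lemma cosKernelDeriv_nonneg_of_five_ninths_le_of_le_two_thirds (h₀ : 5 / 9 ≤ s)
    (h₁ : s ≤ 2 / 3) : 0 ≤ cosKernelDeriv s := by
  have hπ := pi_pos
  rw [cosKernelDeriv_eq, neg_nonneg]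
  have hsin := sin_nonneg_of_nonneg_of_le_pi (x := 3 * π / 2 * s) (by nlinarith) (by nlinarith)
  have hcos := cos_le_neg_sqrt_three_div_two (θ := 3 * π / 2 * s)
    (abs_le.mpr ⟨by nlinarith, by nlinarith⟩)
  exact mul_nonpos_of_nonneg_of_nonpos (by positivity)
    (mul_nonpos_of_nonneg_of_nonpos hsin (by linarith))

lemma cosKernelDeriv_nonpos_of_two_thirds_le_of_le_seven_ninths (h₀ : 2 / 3 ≤ s)
    (h₁ : s ≤ 7 / 9) : cosKernelDeriv s ≤ 0 := by
  have hπ := pi_pos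
  rw [cosKernelDeriv_eq, neg_nonpos]
  have hsin := sin_nonpos_of_pi_le_of_le_two_pi (θ := 3 * π / 2 * s) (by nlinarith)
    (by nlinarith)
  have hcos := cos_le_neg_sqrt_three_div_two (θ := 3 * π / 2 * s)
    (abs_le.mpr ⟨by nlinarith, by nlinarith⟩)
  exact mul_nonneg (by positivity) (mul_nonneg_of_nonpos_of_nonpos hsin (by linarith))

lemma cosKernelDeriv_nonneg_of_seven_ninths_le_of_le_one (h₀ : 7 / 9 ≤ s) (h₁ : s ≤ 1) :
    0 ≤ cosKernelDeriv s := by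
  have hπ := pi_pos
  rw [cosKernelDeriv_eq, neg_nonneg]
  have hsin := sin_nonpos_of_pi_le_of_le_two_pi (θ := 3 * π / 2 * s) (by nlinarith)
    (by nlinarith)
  have hcos := neg_sqrt_three_div_two_le_cos (θ := 2 * π - 3 * π / 2 * s) (by nlinarith)
    (by nlinarith)
  rw [cos_two_pi_sub] at hcos
  exact mul_nonpos_of_nonneg_of_nonpos (by positivity)
    (mul_nonpos_of_nonpos_of_nonneg hsin (by linarith))

end cosKernelDeriv_sign

lemma cosKernel_zero : cosKernel 0 = 2 * √3 + 1 := by simp [cosKernel]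

lemma cosKernel_five_ninths : cosKernel (5 / 9) = -(5 / 2) := by
  rw [cosKernel_eq, show 3 * π / 2 * (5 / 9 : ℝ) = π - π / 6 by ring, cos_pi_sub, cos_pi_div_six]
  nlinarith [sq_sqrt (show (0 : ℝ) ≤ 3 by norm_num)]

lemma cosKernel_two_thirds : cosKernel (2 / 3) = 1 - 2 * √3 := by
  rw [cosKernel_eq, show 3 * π / 2 * (2 / 3 : ℝ) = π by ring, cos_pi]; ring

lemma cosKernel_seven_ninths : cosKernel (7 / 9) = -(5 / 2) := by
  rw [cosKernel_eq, show 3 * π / 2 * (7 / 9 : ℝ) = π / 6 + π by ring, cos_add_pi, cos_pi_div_six]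
  nlinarith [sq_sqrt (show (0 : ℝ) ≤ 3 by norm_num)]

lemma cosKernel_one : cosKernel 1 = -1 := by
  rw [cosKernel_eq, show 3 * π / 2 * (1 : ℝ) = π / 2 + π by ring, cos_add_pi, cos_pi_div_two]
  ring

lemma cosKernelPrimitive_zero : cosKernelPrimitive 0 = 0 := by simp [cosKernelPrimitive]

lemma cosKernelPrimitive_one : cosKernelPrimitive 1 = -(4 * √3 / (3 * π)) := by
  rw [cosKernelPrimitive, show 3 * π / 2 * (1 : ℝ) = π / 2 + π by ring, sin_add_pi,
    sin_pi_div_two, show 3 * π * (1 : ℝ) = (3 : ℕ) * π by push_cast; ring, sin_nat_mul_pi]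
  ring

lemma intervalIntegrable_cosKernelDeriv_mul_affine (A c u v : ℝ) :
    IntervalIntegrable (fun s => cosKernelDeriv s * (A + c * s)) volume u v :=
  (continuous_cosKernelDeriv.mul (continuous_const.add (continuous_const.mul continuous_id))
    ).intervalIntegrable _ _

lemma integral_cosKernelDeriv_mul_affine (A c u v : ℝ) :
    ∫ s in u..v, cosKernelDeriv s * (A + c * s) =
      ((A + c * v) * cosKernel v - c * cosKernelPrimitive v) -
        ((A + c * u) * cosKernel u - c * cosKernelPrimitive u) := by
  refine intervalIntegral.integral_eq_sub_of_hasDerivAt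
    (f := fun s => (A + c * s) * cosKernel s - c * cosKernelPrimitive s) (fun s _ => ?_)
    (intervalIntegrable_cosKernelDeriv_mul_affine A c u v)
  have hlin := ((hasDerivAt_id s).const_mul c).const_add A
  refine ((hlin.mul (hasDerivAt_cosKernel s)).sub
    ((hasDerivAt_cosKernelPrimitive s).const_mul c)).congr_deriv ?_
  simp only [id]; ring

lemma le_integral_cosKernelDeriv_mul {H : ℝ → ℝ} (hH : Monotone H) {a c : ℝ}
    (hub : ∀ s ∈ Ioo (0 : ℝ) 1, H s ≤ a + c * s) (hlb : ∀ s ∈ Ioo (0 : ℝ) 1, -a + c * s ≤ H s) :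
    c * (4 * √3 / (3 * π) - 1) + a * (2 * √3 - 12) ≤ ∫ s in 0..1, cosKernelDeriv s * H s := by
  have hKH (u v : ℝ) : IntervalIntegrable (fun s => cosKernelDeriv s * H s) volume u v :=
    hH.intervalIntegrable.continuousOn_mul continuous_cosKernelDeriv.continuousOn
  have hKL (A u v : ℝ) := intervalIntegrable_cosKernelDeriv_mul_affine A c u v
  have h₁ : ∫ s in 0..5 / 9, cosKernelDeriv s * (a + c * s)
      ≤ ∫ s in 0..5 / 9, cosKernelDeriv s * H s :=
    intervalIntegral.integral_mono_on_of_le_Ioo (by norm_num) (hKL _ _ _) (hKH _ _)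
      fun s hs => mul_le_mul_of_nonpos_left (hub s ⟨hs.1, by linarith [hs.2]⟩)
        (cosKernelDeriv_nonpos_of_nonneg_of_le_five_ninths hs.1.le hs.2.le)
  have h₂ : ∫ s in 5 / 9..2 / 3, cosKernelDeriv s * (-a + c * s)
      ≤ ∫ s in 5 / 9..2 / 3, cosKernelDeriv s * H s :=
    intervalIntegral.integral_mono_on_of_le_Ioo (by norm_num) (hKL _ _ _) (hKH _ _)
      fun s hs => mul_le_mul_of_nonneg_left (hlb s ⟨by linarith [hs.1], by linarith [hs.2]⟩)
        (cosKernelDeriv_nonneg_of_five_ninths_le_of_le_two_thirds hs.1.le hs.2.le)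
  have h₃ : ∫ s in 2 / 3..7 / 9, cosKernelDeriv s * (a + c * s)
      ≤ ∫ s in 2 / 3..7 / 9, cosKernelDeriv s * H s :=
    intervalIntegral.integral_mono_on_of_le_Ioo (by norm_num) (hKL _ _ _) (hKH _ _)
      fun s hs => mul_le_mul_of_nonpos_left (hub s ⟨by linarith [hs.1], by linarith [hs.2]⟩)
        (cosKernelDeriv_nonpos_of_two_thirds_le_of_le_seven_ninths hs.1.le hs.2.le)
  have h₄ : ∫ s in 7 / 9..1, cosKernelDeriv s * (-a + c * s)
      ≤ ∫ s in 7 / 9..1, cosKernelDeriv s * H s :=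
    intervalIntegral.integral_mono_on_of_le_Ioo (by norm_num) (hKL _ _ _) (hKH _ _)
      fun s hs => mul_le_mul_of_nonneg_left (hlb s ⟨by linarith [hs.1], hs.2⟩)
        (cosKernelDeriv_nonneg_of_seven_ninths_le_of_le_one hs.1.le hs.2.le)
  rw [← intervalIntegral.integral_add_adjacent_intervals (hKH 0 (7 / 9)) (hKH _ 1),
    ← intervalIntegral.integral_add_adjacent_intervals (hKH 0 (2 / 3)) (hKH _ (7 / 9)),
    ← intervalIntegral.integral_add_adjacent_intervals (hKH 0 (5 / 9)) (hKH _ (2 / 3))]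
  simp only [integral_cosKernelDeriv_mul_affine, cosKernel_zero, cosKernel_five_ninths,
    cosKernel_two_thirds, cosKernel_seven_ninths, cosKernel_one, cosKernelPrimitive_zero,
    cosKernelPrimitive_one] at h₁ h₂ h₃ h₄
  linarith

lemma integral_cosKernel_nonneg (ν : Measure ℝ) [IsProbabilityMeasure ν]
    (hν : ∀ l, 0 ≤ ∫ x, cos (l * x) ∂ν) : 0 ≤ ∫ x, cosKernel x ∂ν := by
  have hcos (l : ℝ) : Integrable (fun x => cos (l * x)) ν :=
    Integrable.of_bound (by fun_prop) 1 (ae_of_all _ fun x => by simpa using abs_cos_le_one _)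
  have : ∫ x, cosKernel x ∂ν =
      2 * √3 * ∫ x, cos (3 * π / 2 * x) ∂ν + ∫ x, cos (3 * π * x) ∂ν := by
    rw [← integral_const_mul, ← integral_add ((hcos _).const_mul _) (hcos _)]
    rfl
  rw [this]
  have := hν (3 * π / 2)
  have := hν (3 * π)
  positivity

theorem mul_sqrt_three_div_pi_le_of_forall_measureReal_Iic_le (ν : Measure ℝ)
    [IsProbabilityMeasure ν] [ν.IsNegInvariant] (hν : ∀ᵐ x ∂ν, |x| ≤ 1)
    (hcos : ∀ l, 0 ≤ ∫ x, cos (l * x) ∂ν) {α : ℝ}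
    (hF : ∀ t ∈ Icc (-1 : ℝ) 1, ν.real (Iic t) ≤ α * (t + 1)) :
    8 * α * √3 / (3 * π) ≤ (2 * α - 1) * (13 - 2 * √3) := by
  set H : ℝ → ℝ := fun s => ν.real {x | |x| < s}
  have hH : Monotone H := fun u v huv =>
    measureReal_mono fun x (hx : |x| < u) => show |x| < v from hx.trans_le huv
  have hub : ∀ s ∈ Ioo (0 : ℝ) 1, H s ≤ (2 * α - 1) + 2 * α * s := fun s hs => by
    have := one_sub_measureReal_Iic_le_measureReal_Iic_neg (ν := ν) s
    have := hF s ⟨by linarith [hs.1], hs.2.le⟩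
    simp only [H, measureReal_abs_lt_eq hs.1]
    linarith
  have hlb : ∀ s ∈ Ioo (0 : ℝ) 1, -(2 * α - 1) + 2 * α * s ≤ H s := fun s hs => by
    have := hF (-s) ⟨by linarith [hs.2], by linarith [hs.1]⟩
    simp only [H, measureReal_abs_lt_eq hs.1]
    linarith
  have hlayer : ∫ x, cosKernel x ∂ν = -1 - ∫ s in 0..1, cosKernelDeriv s * H s := by
    simpa only [cosKernel_abs, cosKernel_one] using integral_comp_abs_eq_sub_integral ν
      zero_le_one hν hasDerivAt_cosKernel continuous_cosKernelDeriv
  have hpos := integral_cosKernel_nonneg ν hcos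
  have henv := le_integral_cosKernelDeriv_mul hH hub hlb
  have : 8 * α * √3 / (3 * π) = 2 * α * (4 * √3 / (3 * π)) := by ring
  linarith

theorem stmt_10_general {Ω : Type*} [MeasurableSpace Ω] (μ : Measure Ω)
    (D : Measure ℝ) [IsProbabilityMeasure D] (hD01 : D (Set.Icc (0 : ℝ) 1) = 1)
    (X Y : Ω → ℝ) (hX : Measurable X) (hY : Measurable Y)
    (hind : ProbabilityTheory.IndepFun X Y μ)
    (hXd : μ.map X = D) (hYd : μ.map Y = D) :
    ∃ t ∈ Set.Icc (-1 : ℝ) 1,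
      0.539 * (t + 1) < (μ {ω | X ω - Y ω ≤ t}).toReal := by
  have hlaw : μ.map (fun ω => X ω - Y ω) = (D.prod D).map fun p : ℝ × ℝ => p.1 - p.2 := by
    have hprod := (ProbabilityTheory.indepFun_iff_map_prod_eq_prod_map_map'
      hX.aemeasurable hY.aemeasurable (hXd ▸ inferInstance) (hYd ▸ inferInstance)).mp hind
    rw [hXd, hYd] at hprod
    rw [← hprod, Measure.map_map (by fun_prop) (by fun_prop)]
    rfl
  have := Measure.isProbabilityMeasure_map (μ := D.prod D)
    (f := fun p : ℝ × ℝ => p.1 - p.2) (by fun_prop)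
  have hnum : (2 * 0.539 - 1) * (13 - 2 * √3) < 8 * 0.539 * √3 / (3 * π) := by
    have hπ : π < 3.1416 := pi_lt_d4
    have h3 : (1.732 : ℝ) < √3 := by rw [lt_sqrt (by norm_num)]; norm_num
    rw [lt_div_iff₀ (by positivity)]
    nlinarith [pi_pos]
  by_contra! hcdf
  refine hnum.not_ge (mul_sqrt_three_div_pi_le_of_forall_measureReal_Iic_le _
    (ae_abs_le_one_map_sub_prod_self D hD01) (integral_cos_mul_map_sub_prod_self_nonneg D)
    fun t ht => ?_)
  rw [← hlaw, map_measureReal_apply (by fun_prop) measurableSet_Iic]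
  exact hcdf t ht

/-- For every probability distribution `D` supported on `[0,1]`, if `X`
and `Y` are independent random variables each distributed according to `D`, then there
exists `t ∈ [-1,1]` with `Pr[X - Y ≤ t] > 0.539·(t + 1)`. -/
theorem stmt_10 {Ω : Type*} [MeasurableSpace Ω] (μ : Measure Ω) [IsProbabilityMeasure μ]
    (D : Measure ℝ) [IsProbabilityMeasure D] (hD01 : D (Set.Icc (0 : ℝ) 1) = 1)
    (X Y : Ω → ℝ) (hX : Measurable X) (hY : Measurable Y)
    (hind : ProbabilityTheory.IndepFun X Y μ)
    (hXd : μ.map X = D) (hYd : μ.map Y = D) :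
    ∃ t ∈ Set.Icc (-1 : ℝ) 1,
      0.539 * (t + 1) < (μ {ω | X ω - Y ω ≤ t}).toReal :=
  stmt_10_general μ D hD01 X Y hX hY hind hXd hYd
end
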